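/- (Proposition 1, empirical form.) For a finite dataset of N points with group assignment g and cluster assignment c such that every cluster is nonempty and K is nonempty, the minimum over clusters k of the per-cluster group entropy H_k equals the global group entropy H if and only if the counting independence condition |g̃_t ∩ c̃_k|·N = |g̃_t|·|c̃_k| holds for all groups t and clusters k. -/

import Mathlib

/-- Number of points in group `t`: `|g̃_t|` where `g̃_t = {i | g i = t}`. -/
def gcnt {N : ℕ} {T : Type*} [DecidableEq T] (g : Fin N → T) (t : T) : ℕ :=
  (Finset.univ.filter fun i => g i = t).card

/-- Number of points in cluster `k`: `|c̃_k|` where `c̃_k = {i | c i = k}`. -/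
def ccnt {N : ℕ} {K : Type*} [DecidableEq K] (c : Fin N → K) (k : K) : ℕ :=
  (Finset.univ.filter fun i => c i = k).card

/-- Number of points in group `t` and cluster `k`: `|g̃_t ∩ c̃_k|`. -/
def gccnt {N : ℕ} {T K : Type*} [DecidableEq T] [DecidableEq K]
    (g : Fin N → T) (c : Fin N → K) (t : T) (k : K) : ℕ :=
  (Finset.univ.filter fun i => g i = t ∧ c i = k).card

/-- Per-cluster group entropy
`H_k = -∑ t, (|g̃_t ∩ c̃_k|/|c̃_k|) log (|g̃_t ∩ c̃_k|/|c̃_k|)`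
(natural log, `0 log 0 = 0`). -/
noncomputable def Hclu {N : ℕ} {T K : Type*} [Fintype T] [DecidableEq T] [DecidableEq K]
    (g : Fin N → T) (c : Fin N → K) (k : K) : ℝ :=
  -∑ t : T, ((gccnt g c t k : ℝ) / (ccnt c k : ℝ)) *
      Real.log ((gccnt g c t k : ℝ) / (ccnt c k : ℝ))

/-- Global group entropy `H = -∑ t, (|g̃_t|/N) log (|g̃_t|/N)`
(natural log, `0 log 0 = 0`). -/
noncomputable def Hglob {N : ℕ} {T : Type*} [Fintype T] [DecidableEq T]
    (g : Fin N → T) : ℝ :=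
  -∑ t : T, ((gcnt g t : ℝ) / (N : ℝ)) * Real.log ((gcnt g t : ℝ) / (N : ℝ))

/-!
With weights `w k = |c̃_k| / N`, the per-cluster group distributions `x t k = |g̃_t ∩ c̃_k| / |c̃_k|`
average to the global one `|g̃_t| / N`. Jensen's inequality for the strictly concave
`negMulLog x = -x log x`, applied for each group `t`, gives `∑ k, w k * H_k ≤ H`, with equality
iff `x t k` does not depend on `k`, which is the counting independence condition.
If `min_k H_k = H`, then `∑ k, w k * H_k ≥ H`, so equality holds; conversely, independence makes
every `H_k` equal to `H`.
-/

open Finset Real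

section Jensen

variable {T K : Type*} [Fintype T] [Fintype K] {w : K → ℝ}

theorem sum_mul_negMulLog_le_negMulLog_sum (hw₀ : ∀ k, 0 ≤ w k) (hw₁ : ∑ k, w k = 1)
    {x : K → ℝ} (hx : ∀ k, 0 ≤ x k) :
    ∑ k, w k * negMulLog (x k) ≤ negMulLog (∑ k, w k * x k) := by
  simpa using concaveOn_negMulLog.le_map_sum (fun k _ => hw₀ k) hw₁ fun k _ => Set.mem_Ici.2 (hx k)

theorem sum_mul_sum_negMulLog_le_sum_negMulLog_sum (hw₀ : ∀ k, 0 ≤ w k)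
    (hw₁ : ∑ k, w k = 1) {x : T → K → ℝ} (hx : ∀ t k, 0 ≤ x t k) :
    ∑ k, w k * ∑ t, negMulLog (x t k) ≤ ∑ t, negMulLog (∑ k, w k * x t k) := by
  simp_rw [mul_sum]
  rw [sum_comm]
  exact sum_le_sum fun t _ => sum_mul_negMulLog_le_negMulLog_sum hw₀ hw₁ (hx t)

theorem sum_mul_sum_negMulLog_eq_sum_negMulLog_sum_iff (hw₀ : ∀ k, 0 < w k)
    (hw₁ : ∑ k, w k = 1) {x : T → K → ℝ} (hx : ∀ t k, 0 ≤ x t k) :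
    ∑ k, w k * ∑ t, negMulLog (x t k) = ∑ t, negMulLog (∑ k, w k * x t k) ↔
      ∀ t k, x t k = ∑ k', w k' * x t k' := by
  simp_rw [mul_sum]
  rw [sum_comm, sum_eq_sum_iff_of_le fun t _ =>
    sum_mul_negMulLog_le_negMulLog_sum (fun k => (hw₀ k).le) hw₁ (hx t)]
  refine forall_congr' fun t => ?_
  rw [eq_comm]
  simpa using strictConcaveOn_negMulLog.map_sum_eq_iff (t := univ) (fun k _ => hw₀ k) hw₁
    fun k _ => Set.mem_Ici.2 (hx t k)

end Jensen

section Counts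

variable {N : ℕ} {T K : Type*} [DecidableEq T] [DecidableEq K]

theorem sum_gccnt [Fintype K] (g : Fin N → T) (c : Fin N → K) (t : T) :
    ∑ k, gccnt g c t k = gcnt g t := by
  rw [gcnt, card_eq_sum_card_fiberwise fun i _ => mem_univ (c i)]
  simp [gccnt, filter_filter]

theorem sum_ccnt [Fintype K] (c : Fin N → K) : ∑ k, ccnt c k = N := by
  simpa [ccnt] using (card_eq_sum_card_fiberwise (s := univ) fun i _ => mem_univ (c i)).symm

theorem Hclu_eq_sum_negMulLog [Fintype T] (g : Fin N → T) (c : Fin N → K) (k : K) :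
    Hclu g c k = ∑ t, negMulLog (gccnt g c t k / ccnt c k) := by
  simp [Hclu, negMulLog]

theorem Hglob_eq_sum_negMulLog [Fintype T] (g : Fin N → T) :
    Hglob g = ∑ t, negMulLog (gcnt g t / N) := by
  simp [Hglob, negMulLog]

theorem sum_ccnt_div_mul_gccnt_div [Fintype K] (g : Fin N → T) {c : Fin N → K}
    (hc : ∀ k, 0 < ccnt c k) (t : T) :
    ∑ k, (ccnt c k / N : ℝ) * (gccnt g c t k / ccnt c k) = gcnt g t / N := by
  have hterm (k : K) : (ccnt c k / N : ℝ) * (gccnt g c t k / ccnt c k) = gccnt g c t k / N := by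
    have : (ccnt c k : ℝ) ≠ 0 := by exact_mod_cast (hc k).ne'
    field_simp
  simp only [hterm, ← sum_div]
  exact_mod_cast congrArg (fun n : ℕ => (n : ℝ) / N) (sum_gccnt g c t)

theorem gccnt_mul_eq_iff_div_eq (g : Fin N → T) {c : Fin N → K} (hN : 0 < N) {t : T} {k : K}
    (hk : 0 < ccnt c k) :
    gccnt g c t k * N = gcnt g t * ccnt c k ↔ (gccnt g c t k / ccnt c k : ℝ) = gcnt g t / N := by
  rw [div_eq_div_iff (by positivity) (by positivity)]
  exact_mod_cast Iff.rfl

theorem sum_ccnt_div [Fintype K] (c : Fin N → K) (hN : 0 < N) : ∑ k, (ccnt c k / N : ℝ) = 1 := by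
  rw [← sum_div, div_eq_one_iff_eq (by positivity)]
  exact_mod_cast sum_ccnt c

theorem Hglob_eq_sum_negMulLog_sum [Fintype T] [Fintype K] (g : Fin N → T) {c : Fin N → K}
    (hc : ∀ k, 0 < ccnt c k) :
    Hglob g = ∑ t, negMulLog (∑ k, (ccnt c k / N : ℝ) * (gccnt g c t k / ccnt c k)) := by
  simp only [sum_ccnt_div_mul_gccnt_div g hc, Hglob_eq_sum_negMulLog]

theorem sum_ccnt_div_mul_Hclu_le_Hglob [Fintype T] [Fintype K] (g : Fin N → T) {c : Fin N → K}
    (hN : 0 < N) (hc : ∀ k, 0 < ccnt c k) :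
    ∑ k, (ccnt c k / N : ℝ) * Hclu g c k ≤ Hglob g := by
  rw [Hglob_eq_sum_negMulLog_sum g hc]
  simp only [Hclu_eq_sum_negMulLog]
  exact sum_mul_sum_negMulLog_le_sum_negMulLog_sum (fun k => by positivity) (sum_ccnt_div c hN)
    fun t k => by positivity

theorem sum_ccnt_div_mul_Hclu_eq_Hglob_iff [Fintype T] [Fintype K] (g : Fin N → T)
    {c : Fin N → K} (hN : 0 < N) (hc : ∀ k, 0 < ccnt c k) :
    ∑ k, (ccnt c k / N : ℝ) * Hclu g c k = Hglob g ↔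
      ∀ t k, gccnt g c t k * N = gcnt g t * ccnt c k := by
  have hw₀ (k : K) : (0 : ℝ) < ccnt c k / N := by have := hc k; positivity
  rw [Hglob_eq_sum_negMulLog_sum g hc]
  simp only [Hclu_eq_sum_negMulLog]
  rw [sum_mul_sum_negMulLog_eq_sum_negMulLog_sum_iff hw₀ (sum_ccnt_div c hN) fun t k => by positivity]
  simp only [sum_ccnt_div_mul_gccnt_div g hc, gccnt_mul_eq_iff_div_eq g hN (hc _)]

end Counts

/-- Proposition 1 (empirical form): the minimum over clusters `k` of the per-cluster
group entropy `H_k` equals the global group entropy `H` iff the counting independence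
condition `|g̃_t ∩ c̃_k| · N = |g̃_t| · |c̃_k|` holds for all `t, k`. -/
theorem stmt11 {N : ℕ} {T K : Type*} [Fintype T] [DecidableEq T] [Fintype K] [DecidableEq K]
    [Nonempty K]
    (g : Fin N → T) (c : Fin N → K) (hN : 0 < N)
    (hc : ∀ k : K, 0 < ccnt c k) :
    (Finset.univ.inf' Finset.univ_nonempty (fun k : K => Hclu g c k) = Hglob g)
      ↔ ∀ (t : T) (k : K), gccnt g c t k * N = gcnt g t * ccnt c k := by
  rw [← sum_ccnt_div_mul_Hclu_eq_Hglob_iff g hN hc]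
  constructor
  · intro hmin
    refine le_antisymm (sum_ccnt_div_mul_Hclu_le_Hglob g hN hc) ?_
    calc Hglob g = ∑ k, (ccnt c k / N : ℝ) * Hglob g := by
          rw [← sum_mul, sum_ccnt_div c hN, one_mul]
      _ ≤ ∑ k, (ccnt c k / N : ℝ) * Hclu g c k := sum_le_sum fun k _ =>
          mul_le_mul_of_nonneg_left (hmin ▸ inf'_le _ (mem_univ k)) (by positivity)
  · intro h
    have hconst (k : K) : Hclu g c k = Hglob g := by
      simp only [Hclu_eq_sum_negMulLog, Hglob_eq_sum_negMulLog,
        (gccnt_mul_eq_iff_div_eq g hN (hc k)).1 ((sum_ccnt_div_mul_Hclu_eq_Hglob_iff g hN hc).1 h _ k)]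
    simp only [hconst, inf'_const]
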